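/- (Theorem 4.1(i), Abelian Networks Solve Monotone Integer Programs) Let N be an abelian network with finite total alphabet A, let x ∈ ℕ^A, q ∈ Q, and define F : ℕ^A → ℕ^A by F(u) = x + N(u,q). If N halts on input x.q, then the odometer u = [x.q] is the least element of the feasible set {u ∈ ℕ^A : F(u) ≤ u}; consequently, for every c ∈ ℝ^A with all coordinates positive, [x.q] is the unique minimizer of cᵀu subject to u ∈ ℕ^A and F(u) ≤ u. -/

import Mathlib

/-- The letter-count vector `|w| ∈ ℕ^A` of a word `w ∈ A^*`. -/
def lc {A : Type*} [DecidableEq A] (w : List A) : A → ℕ := fun a => w.count a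

/-- An abelian-network *data* structure on a directed graph with vertex set `V`, edge set `E`
(with source and target maps, allowing loops and multiple edges), total alphabet
`A = ⊔_v A_v` (the letter `a` belongs to the alphabet of the vertex `loc a`), and
state space `Q v` for the processor at vertex `v`.  The abelian hypothesis on the
processors is the separate predicate `AbelianNetwork.IsAbelian`. -/
structure AbelianNetwork (V E A : Type*) (Q : V → Type*) [DecidableEq V] [DecidableEq A] where
  /-- source of an edge -/
  src : E → V
  /-- target of an edge -/
  tgt : E → V
  /-- the vertex whose input alphabet contains the letter `a` -/
  loc : A → V
  /-- the (finitely many) outgoing edges of each vertex -/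
  outEdges : V → Finset E
  mem_outEdges : ∀ (e : E) (v : V), e ∈ outEdges v ↔ src e = v
  /-- single-letter transition function `T_v(a, ·)` of the processor at `v = loc a` -/
  trans : (a : A) → Q (loc a) → Q (loc a)
  /-- message-passing function: the word sent along the edge `e` (with `src e = loc a`)
  when the processor at `loc a` processes the letter `a` in state `q` -/
  msg : (e : E) → (a : A) → Q (loc a) → List A
  /-- letters sent along `e` belong to the alphabet of the target of `e` -/
  msg_tgt : ∀ (e : E) (a : A) (q : Q (loc a)), src e = loc a → ∀ b ∈ msg e a q, loc b = tgt e

namespace AbelianNetwork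

variable {V E A : Type*} {Q : V → Type*} [DecidableEq V] [DecidableEq A]
variable (N : AbelianNetwork V E A Q)

/-- The map `t_a : Q → Q` updating the `loc a` coordinate by `T_{loc a}(a, ·)` and
fixing all other coordinates. -/
def tact (a : A) (q : ∀ v, Q v) : ∀ v, Q v :=
  Function.update q (N.loc a) (N.trans a (q (N.loc a)))

/-- `t_w = t_{w_r} ∘ ⋯ ∘ t_{w_1}` for a word `w = w_1 ⋯ w_r`. -/
def tword (w : List A) (q : ∀ v, Q v) : ∀ v, Q v :=
  w.foldl (fun q a => N.tact a q) q

/-- The word sent along the edge `e` when the letters of `w` are processed in order,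
starting from the global state `q`.  (Extends the message-passing functions to words.) -/
def msgword (e : E) : List A → (∀ v, Q v) → List A
  | [], _ => []
  | a :: w, q =>
      (if N.src e = N.loc a then N.msg e a (q (N.loc a)) else []) ++ msgword e w (N.tact a q)

/-- `N(a, q_{loc a}) ∈ ℕ^A`: the vector counting the letters produced when the processor at
`loc a` processes the letter `a`, summed over the outgoing edges of `loc a`. -/
def Nletter (a : A) (q : ∀ v, Q v) : A → ℕ := fun b =>
  ∑ e ∈ N.outEdges (N.loc a), (N.msg e a (q (N.loc a))).count b

/-- `N(w, q) = ∑_i N(w_i, q^{i-1}_{v(i)})` for a word `w = w_1 ⋯ w_r`. -/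
def Nword : List A → (∀ v, Q v) → A → ℕ
  | [], _ => fun _ => 0
  | a :: w, q => fun b => N.Nletter a q b + Nword w (N.tact a q) b

/-- The network is *abelian*: permuting a word input to a single processor does not change
the resulting state and changes each output word only by permuting its letters. -/
def IsAbelian : Prop :=
  ∀ (v : V) (w w' : List A), (∀ a ∈ w, N.loc a = v) → (∀ a ∈ w', N.loc a = v) →
    (w : Multiset A) = (w' : Multiset A) →
    ∀ q : ∀ u, Q u,
      N.tword w q = N.tword w' q ∧
      ∀ e : E, ((N.msgword e w q : Multiset A) = (N.msgword e w' q : Multiset A))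

/-- The state transition `π_a(x.q) = (x - 1_a + N(a, q_{loc a})).t_a(q)` of the whole
network, viewed as a single automaton with states `x.q ∈ ℤ^A × Q`. -/
def piLetter (a : A) (s : (A → ℤ) × (∀ v, Q v)) : (A → ℤ) × (∀ v, Q v) :=
  (fun b => s.1 b - (if b = a then 1 else 0) + (N.Nletter a s.2 b : ℤ), N.tact a s.2)

/-- `π_w = π_{w_r} ∘ ⋯ ∘ π_{w_1}`. -/
def piWord (w : List A) (s : (A → ℤ) × (∀ v, Q v)) : (A → ℤ) × (∀ v, Q v) :=
  w.foldl (fun s a => N.piLetter a s) s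

/-- The word `w` is a *legal execution* from `x.q`: each letter is a legal move
(`x_a ≥ 1`) from the state obtained by executing the previous letters. -/
def Legal : List A → ((A → ℤ) × (∀ v, Q v)) → Prop
  | [], _ => True
  | a :: w, s => 1 ≤ s.1 a ∧ Legal w (N.piLetter a s)

/-- The word `w` is a *complete execution* from `x.q`: after executing `w`,
no letters remain to be processed. -/
def Complete (w : List A) (s : (A → ℤ) × (∀ v, Q v)) : Prop :=
  ∀ a : A, (N.piWord w s).1 a ≤ 0

/-- A canonical word with letter-count vector `u ∈ ℕ^A`. -/
noncomputable def vecWord [Fintype A] (u : A → ℕ) : List A :=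
  (Finset.univ : Finset A).toList.flatMap fun a => List.replicate (u a) a

/-- `N(u, q)` for a vector `u ∈ ℕ^A`, defined as `N(w, q)` for a word `w` with `|w| = u`. -/
noncomputable def Nvec [Fintype A] (u : A → ℕ) (q : ∀ v, Q v) : A → ℕ := N.Nword (vecWord u) q

end AbelianNetwork

/-!
Each processor being abelian makes the whole network abelian: the global state `t_w q` and the
emitted letters `N(w, q)` depend only on `|w|`, since two letters at different vertices act on
different coordinates and two letters at the same vertex commute by hypothesis. Executing `w` from
`x.q` leaves `x - |w| + N(w, q)` letters, so a complete execution has a feasible odometer.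
Conversely, a legal execution never overtakes a feasible `u`: if `|w| ≤ u` and `a` is legal after
`w`, then `|w|_a + 1 ≤ x_a + N(w, q)_a ≤ x_a + N(u, q)_a ≤ u_a`, where `N(·, q)` is monotone
because `N(w r, q) = N(w, q) + N(r, t_w q)`. A positive linear objective is strictly monotone on
`ℕ^A`, so the least feasible point is its unique minimizer.
-/

lemma lc_append {A : Type*} [DecidableEq A] (p r : List A) : lc (p ++ r) = lc p + lc r :=
  funext fun _ => List.count_append

lemma lc_concat {A : Type*} [DecidableEq A] (w : List A) (a : A) :
    lc (w ++ [a]) = lc w + Pi.single a 1 := by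
  rw [lc_append]
  congr 1
  funext b
  by_cases h : b = a <;> simp [lc, h, Ne.symm]

lemma List.perm_of_lc_eq {A : Type*} [DecidableEq A] {w w' : List A} (h : lc w = lc w') :
    w.Perm w' :=
  List.perm_iff_count.mpr fun a => congrFun h a

lemma sum_mul_natCast_strictMono {ι : Type*} [Fintype ι] {c : ι → ℝ} (hc : ∀ i, 0 < c i) :
    StrictMono fun u : ι → ℕ => ∑ i, c i * (u i : ℝ) := by
  intro u v huv
  obtain ⟨hle, i, hi⟩ := Pi.lt_def.mp huv
  refine Finset.sum_lt_sum (fun j _ => ?_) ⟨i, Finset.mem_univ i, ?_⟩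
  · exact mul_le_mul_of_nonneg_left (by exact_mod_cast hle j) (hc j).le
  · exact mul_lt_mul_of_pos_left (by exact_mod_cast hi) (hc i)

namespace AbelianNetwork

variable {V E A : Type*} {Q : V → Type*} [DecidableEq V] [DecidableEq A]
variable {N : AbelianNetwork V E A Q}

lemma lc_vecWord [Fintype A] (u : A → ℕ) : lc (vecWord u) = u := by
  funext a
  simp [lc, vecWord, List.count_flatMap, List.count_replicate, Finset.sum_map_toList]

lemma tword_append (p r : List A) (q : ∀ v, Q v) :
    N.tword (p ++ r) q = N.tword r (N.tword p q) :=
  List.foldl_append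

lemma Nword_append (p r : List A) (q : ∀ v, Q v) :
    N.Nword (p ++ r) q = N.Nword p q + N.Nword r (N.tword p q) := by
  induction p generalizing q with
  | nil => funext b; simp [Nword, tword]
  | cons a p ih =>
    funext b
    simp only [List.cons_append, Nword, ih, Pi.add_apply]
    rw [add_assoc]
    rfl

lemma Nletter_congr (a : A) {q q' : ∀ v, Q v} (h : q (N.loc a) = q' (N.loc a)) :
    N.Nletter a q = N.Nletter a q' := by
  funext b
  simp only [Nletter, h]

lemma Nword_eq_sum_count_msgword {v : V} {w : List A} (hw : ∀ a ∈ w, N.loc a = v)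
    (q : ∀ u, Q u) (b : A) :
    N.Nword w q b = ∑ e ∈ N.outEdges v, (N.msgword e w q).count b := by
  induction w generalizing q with
  | nil => simp [Nword, msgword]
  | cons a w ih =>
    have ha : N.loc a = v := hw a List.mem_cons_self
    have hsrc : ∀ e ∈ N.outEdges v, N.src e = N.loc a := fun e he =>
      ((N.mem_outEdges e v).mp he).trans ha.symm
    rw [Finset.sum_congr rfl fun e he => by
        rw [msgword, if_pos (hsrc e he), List.count_append],
      Finset.sum_add_distrib, ← ih (fun c hc => hw c (List.mem_cons_of_mem a hc))]
    simp only [Nword, Nletter, ha]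

namespace IsAbelian

lemma pair_comm_of_loc_eq (hN : N.IsAbelian) {a b : A} (h : N.loc a = N.loc b)
    (q : ∀ v, Q v) :
    N.tword [a, b] q = N.tword [b, a] q ∧
      ∀ e, (N.msgword e [a, b] q : Multiset A) = N.msgword e [b, a] q :=
  hN (N.loc a) [a, b] [b, a] (by simp [h]) (by simp [h])
    (Multiset.coe_eq_coe.mpr (List.Perm.swap b a [])) q

lemma tword_pair_comm (hN : N.IsAbelian) (a b : A) (q : ∀ v, Q v) :
    N.tword [a, b] q = N.tword [b, a] q := by
  rcases eq_or_ne (N.loc a) (N.loc b) with h | h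
  · exact (hN.pair_comm_of_loc_eq h q).1
  · simp only [tword, List.foldl, tact, Function.update_of_ne h, Function.update_of_ne h.symm]
    exact Function.update_comm h _ _ _

lemma Nword_pair_comm (hN : N.IsAbelian) (a b : A) (q : ∀ v, Q v) :
    N.Nword [a, b] q = N.Nword [b, a] q := by
  funext c
  rcases eq_or_ne (N.loc a) (N.loc b) with h | h
  · rw [Nword_eq_sum_count_msgword (v := N.loc a) (by simp [h]),
      Nword_eq_sum_count_msgword (v := N.loc a) (by simp [h])]
    exact Finset.sum_congr rfl fun e _ =>
      (Multiset.coe_eq_coe.mp ((hN.pair_comm_of_loc_eq h q).2 e)).count_eq c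
  · have hab : N.Nletter b (N.tact a q) = N.Nletter b q :=
      Nletter_congr b (Function.update_of_ne (Ne.symm h) _ _)
    have hba : N.Nletter a (N.tact b q) = N.Nletter a q :=
      Nletter_congr a (Function.update_of_ne h _ _)
    simp only [Nword, hab, hba, add_zero]
    exact add_comm _ _

lemma tword_perm (hN : N.IsAbelian) {w w' : List A} (hp : w.Perm w') (q : ∀ v, Q v) :
    N.tword w q = N.tword w' q := by
  induction hp generalizing q with
  | nil => rfl
  | cons a _ ih => exact ih _
  | swap a b l =>
    change N.tword ([b, a] ++ l) q = N.tword ([a, b] ++ l) q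
    rw [tword_append, tword_append, hN.tword_pair_comm]
  | trans _ _ ih₁ ih₂ => exact (ih₁ q).trans (ih₂ q)

lemma Nword_perm (hN : N.IsAbelian) {w w' : List A} (hp : w.Perm w') (q : ∀ v, Q v) :
    N.Nword w q = N.Nword w' q := by
  induction hp generalizing q with
  | nil => rfl
  | cons a _ ih => funext c; simp only [Nword, ih]
  | swap a b l =>
    have h := Nword_append (N := N) [b, a] l q
    rw [hN.Nword_pair_comm, hN.tword_pair_comm] at h
    exact h.trans (Nword_append [a, b] l q).symm
  | trans _ _ ih₁ ih₂ => exact (ih₁ q).trans (ih₂ q)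

lemma Nvec_lc [Fintype A] (hN : N.IsAbelian) (w : List A) (q : ∀ v, Q v) :
    N.Nvec (lc w) q = N.Nword w q :=
  hN.Nword_perm (List.perm_of_lc_eq (lc_vecWord (lc w))) q

lemma Nword_le_Nvec [Fintype A] (hN : N.IsAbelian) {w : List A} {u : A → ℕ} (h : lc w ≤ u)
    (q : ∀ v, Q v) : N.Nword w q ≤ N.Nvec u q := by
  set r := vecWord (u - lc w)
  have hu : lc (w ++ r) = u := by
    rw [lc_append, lc_vecWord, add_tsub_cancel_of_le h]
  rw [← hu, hN.Nvec_lc, Nword_append]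
  exact le_self_add

end IsAbelian

lemma piWord_fst (w : List A) (s : (A → ℤ) × (∀ v, Q v)) (b : A) :
    (N.piWord w s).1 b = s.1 b - lc w b + N.Nword w s.2 b := by
  induction w generalizing s with
  | nil => simp [piWord, lc, Nword]
  | cons a w ih =>
    change (N.piWord w (N.piLetter a s)).1 b = _
    rw [ih]
    simp only [piLetter, Nword, lc, List.count_cons, beq_iff_eq]
    push_cast
    rcases eq_or_ne b a with rfl | h
    · simp only [if_true]; ring
    · simp only [h, h.symm, if_false]; ring

lemma legal_append (p r : List A) (s : (A → ℤ) × (∀ v, Q v)) :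
    N.Legal (p ++ r) s ↔ N.Legal p s ∧ N.Legal r (N.piWord p s) := by
  induction p generalizing s with
  | nil => simp [Legal, piWord]
  | cons a p ih => simp only [List.cons_append, Legal, ih, and_assoc]; rfl

lemma legal_concat (w : List A) (a : A) (s : (A → ℤ) × (∀ v, Q v)) :
    N.Legal (w ++ [a]) s ↔ N.Legal w s ∧ 1 ≤ (N.piWord w s).1 a := by
  simp [legal_append, Legal]

lemma IsAbelian.lc_le_of_legal [Fintype A] (hN : N.IsAbelian) {x : A → ℕ} {q : ∀ v, Q v}
    {u : A → ℕ} (hu : (fun a => x a + N.Nvec u q a) ≤ u) {w : List A}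
    (hw : N.Legal w (fun a => (x a : ℤ), q)) : lc w ≤ u := by
  induction w using List.reverseRecOn with
  | nil => exact fun _ => Nat.zero_le _
  | append_singleton w a ih =>
    obtain ⟨hw, ha⟩ := (legal_concat w a _).mp hw
    have hwu := ih hw
    have hNa : N.Nword w q a ≤ N.Nvec u q a := hN.Nword_le_Nvec hwu q a
    have hua : x a + N.Nvec u q a ≤ u a := hu a
    rw [piWord_fst] at ha
    dsimp only at ha hua
    intro b
    rw [lc_concat]
    by_cases hb : b = a
    · subst hb; simp only [Pi.add_apply, Pi.single_eq_same]; omega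
    · simpa [Pi.single_eq_of_ne hb] using hwu b

lemma IsAbelian.feasible_of_complete [Fintype A] (hN : N.IsAbelian) {x : A → ℕ}
    {q : ∀ v, Q v} {w : List A} (hw : N.Complete w (fun a => (x a : ℤ), q)) :
    (fun a => x a + N.Nvec (lc w) q a) ≤ lc w := by
  intro a
  have ha := hw a
  rw [piWord_fst, ← hN.Nvec_lc] at ha
  simp only at ha ⊢
  omega

end AbelianNetwork

/-- **Theorem 4.1(i) (Abelian Networks Solve Monotone Integer Programs).** Let `N` be an
abelian network with finite total alphabet `A`, let `x ∈ ℕ^A`, `q ∈ Q`, and define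
`F(u) = x + N(u,q)`.  If `N` halts on input `x.q`, then the odometer `[x.q]` (which is
`|w|` for any complete legal execution `w`) is the least element of the feasible set
`{u ∈ ℕ^A : F(u) ≤ u}`; consequently, for every `c ∈ ℝ^A` with all coordinates positive,
`[x.q]` is the unique minimizer of `cᵀu` subject to `u ∈ ℕ^A` and `F(u) ≤ u`. -/
theorem AbelianNetwork.solves_MIP {V E A : Type*} {Q : V → Type*}
    [DecidableEq V] [DecidableEq A] [Fintype A]
    (N : AbelianNetwork V E A Q) (hN : N.IsAbelian) (x : A → ℕ) (q : ∀ v, Q v)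
    (w : List A)
    (hwl : N.Legal w (fun a => (x a : ℤ), q))
    (hwc : N.Complete w (fun a => (x a : ℤ), q)) :
    ((fun a => x a + N.Nvec (lc w) q a) ≤ lc w ∧
      (∀ u : A → ℕ, (fun a => x a + N.Nvec u q a) ≤ u → lc w ≤ u)) ∧
    ∀ c : A → ℝ, (∀ a, 0 < c a) →
      ∀ u : A → ℕ, (fun a => x a + N.Nvec u q a) ≤ u →
        (∑ a, c a * (lc w a : ℝ) ≤ ∑ a, c a * (u a : ℝ)) ∧
        (∑ a, c a * (u a : ℝ) = ∑ a, c a * (lc w a : ℝ) → u = lc w) := by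
  have hleast : ∀ u : A → ℕ, (fun a => x a + N.Nvec u q a) ≤ u → lc w ≤ u :=
    fun u hu => hN.lc_le_of_legal hu hwl
  refine ⟨⟨hN.feasible_of_complete hwc, hleast⟩, fun c hc u hu => ?_⟩
  have hobj := sum_mul_natCast_strictMono hc
  refine ⟨hobj.monotone (hleast u hu), fun heq => ?_⟩
  by_contra hne
  exact (hobj (lt_of_le_of_ne (hleast u hu) (Ne.symm hne))).ne heq.symm
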